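/- arXiv:0910.0358 — 6 statements merged into one kernel-verified Lean document; each statement's English description precedes it below -/
import Mathlib

section
/- Let G be a compact abelian topological group acting continuously on a compact metrizable topological space M̂, and let M be a G-invariant open subset of M̂. Let A denote the set of subgroups of G that occur as stabilizers G_x = {g ∈ G : g•x = x} of points x ∈ M, and assume A is finite. Then there exists a family of open subsets (V_H)_{H ∈ A} of M, indexed by A, whose union is M and which satisfies: (1) each V_H is G-invariant; (2) for every x ∈ V_H one has G_x ⊆ H; (3) if V_H ∩ V_{H'} ≠ ∅ then H ⊆ H' or H' ⊆ H. Moreover, if in addition a family of open neighborhoods V_x of x (for x ∈ M) is given such that V_{g•x} = g•V_x for all g ∈ G and x ∈ M, then the cover can be chosen so that additionally V_H ⊆ ⋃_{x : G_x = H} V_x for every H ∈ A. -/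
/-!
The orbit types are treated from the largest down. Once the points whose type lies in an upward
closed set `B` are covered, the remaining points of a next type `H₀` form a set `D` closed in `M`;
as its points have type exactly `H₀`, `D` avoids the closures of the members `V H` with `H`
incomparable to `H₀`. Complete normality of the metrizable space gives an open neighbourhood of
`D` in `M` whose closure still avoids them, and the points all of whose translates stay in it form
an invariant neighbourhood, open because `G` is compact.
-/

open Pointwise Set

section

variable {G X : Type*}

theorem isOpen_setOf_forall_smul_mem [TopologicalSpace G] [CompactSpace G] [TopologicalSpace X]
    [SMul G X] [ContinuousSMul G X] {V : Set X}
    (hV : IsOpen V) : IsOpen {x : X | ∀ g : G, g • x ∈ V} := by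
  have : {x : X | ∀ g : G, g • x ∈ V}ᶜ = Prod.snd '' {p : G × X | p.1 • p.2 ∈ V}ᶜ := by
    ext x
    simp
  rw [← isClosed_compl_iff, this]
  exact isClosedMap_snd_of_compactSpace _ (hV.preimage continuous_smul).isClosed_compl

theorem smul_set_eq_self_of_forall_smul_mem [Group G] [MulAction G X] {s : Set X}
    (hs : ∀ g : G, ∀ x ∈ s, g • x ∈ s) (g : G) : g • s = s :=
  (smul_set_subset_iff.2 (hs g)).antisymm
    (subset_smul_set_iff.2 (smul_set_subset_iff.2 (hs g⁻¹)))

theorem exists_isOpen_subset_closure_inter_subset [TopologicalSpace X] [CompletelyNormalSpace X]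
    {M D P : Set X}
    (hM : IsOpen M) (hP : IsOpen P) (hDM : D ⊆ M) (hDP : closure D ∩ M ⊆ P) :
    ∃ U, IsOpen U ∧ D ⊆ U ∧ U ⊆ M ∧ closure U ∩ M ⊆ P := by
  have hD : Disjoint (closure D) (M \ P) :=
    disjoint_left.2 fun x hxD hx => hx.2 (hDP ⟨hxD, hx.1⟩)
  have hP' : Disjoint D (closure (M \ P)) := by
    refine disjoint_left.2 fun x hxD hx => ?_
    have : closure (M \ P) ⊆ Pᶜ := closure_minimal (fun y hy => hy.2) hP.isClosed_compl
    exact this hx (hDP ⟨subset_closure hxD, hDM hxD⟩)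
  obtain ⟨U, ⟨hU, hDU⟩, W, ⟨hW, hMW⟩, hUW⟩ :=
    ((hasBasis_nhdsSet _).disjoint_iff (hasBasis_nhdsSet _)).1 (completely_normal hD hP')
  refine ⟨U ∩ M, hU.inter hM, subset_inter hDU hDM, inter_subset_right, ?_⟩
  rintro x ⟨hxU, hxM⟩
  have hxW : x ∉ W :=
    closure_minimal (inter_subset_left.trans hUW.subset_compl_right) hW.isClosed_compl hxU
  by_contra hxP
  exact hxW (hMW ⟨hxM, hxP⟩)

theorem exists_smul_invariant_isOpen_subset_closure_inter_subset [TopologicalSpace X]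
    [CompletelyNormalSpace X] [TopologicalSpace G] [CompactSpace G] [Group G] [MulAction G X]
    [ContinuousSMul G X] {M D P : Set X}
    (hM : IsOpen M) (hP : IsOpen P) (hDM : D ⊆ M) (hDP : closure D ∩ M ⊆ P)
    (hD : ∀ g : G, ∀ x ∈ D, g • x ∈ D) :
    ∃ U, IsOpen U ∧ (∀ g : G, g • U = U) ∧ D ⊆ U ∧ U ⊆ M ∧ closure U ∩ M ⊆ P := by
  obtain ⟨U, hU, hDU, hUM, hUP⟩ := exists_isOpen_subset_closure_inter_subset hM hP hDM hDP
  have hcore : {x : X | ∀ g : G, g • x ∈ U} ⊆ U := fun x hx => one_smul G x ▸ hx 1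
  refine ⟨_, isOpen_setOf_forall_smul_mem hU,
    smul_set_eq_self_of_forall_smul_mem fun g x hx h => mul_smul h g x ▸ hx (h * g),
    fun x hx g => hDU (hD g x hx), hcore.trans hUM,
    (inter_subset_inter_left _ (closure_mono hcore)).trans hUP⟩

/-- `V` is a good cover of the points of `M` whose orbit type `s x` lies in `B`. The closures of
the members are kept inside `O` and apart, so that a further member can be chosen in an open set
avoiding them. -/
structure IsGoodCover (G : Type*) {X ι : Type*} [SMul G X] [TopologicalSpace X] [LE ι]
    (M : Set X) (s : X → ι) (O : ι → Set X) (B : Set ι) (V : ι → Set X) : Prop where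
  isOpen : ∀ H ∈ B, IsOpen (V H)
  subset : ∀ H ∈ B, V H ⊆ M
  smul_eq : ∀ H ∈ B, ∀ g : G, g • V H = V H
  closure_inter_subset : ∀ H ∈ B, closure (V H) ∩ M ⊆ O H
  le_or_le : ∀ H ∈ B, ∀ H' ∈ B,
    (closure (V H) ∩ closure (V H') ∩ M).Nonempty → H ≤ H' ∨ H' ≤ H
  exists_mem : ∀ x ∈ M, s x ∈ B → ∃ H ∈ B, x ∈ V H

namespace IsGoodCover

variable {ι : Type*} [SMul G X] [TopologicalSpace X] {M : Set X} {s : X → ι} {O : ι → Set X}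
  {B : Set ι} {V : ι → Set X}

theorem empty [LE ι] : IsGoodCover G M s O ∅ V := by
  constructor <;> simp

section LE

variable [LE ι]

theorem subset_of_mem (hV : IsGoodCover G M s O B V) {H : ι} (hH : H ∈ B) : V H ⊆ O H :=
  fun _ hx => hV.closure_inter_subset H hH ⟨subset_closure hx, hV.subset H hH hx⟩

theorem le_or_le_of_nonempty (hV : IsGoodCover G M s O B V) {H H' : ι} (hH : H ∈ B)
    (hH' : H' ∈ B) (hne : (V H ∩ V H').Nonempty) : H ≤ H' ∨ H' ≤ H := by
  obtain ⟨x, hx, hx'⟩ := hne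
  exact hV.le_or_le H hH H' hH' ⟨x, ⟨subset_closure hx, subset_closure hx'⟩, hV.subset H hH hx⟩

theorem biUnion_eq (hV : IsGoodCover G M s O B V) (hs : ∀ x ∈ M, s x ∈ B) : ⋃ H ∈ B, V H = M :=
  (iUnion₂_subset hV.subset).antisymm fun x hx =>
    let ⟨_, hH, hxH⟩ := hV.exists_mem x hx (hs x hx)
    mem_biUnion hH hxH

end LE

theorem update [Preorder ι] [DecidableEq ι] (hV : IsGoodCover G M s O B V) {H₀ : ι}
    (hH₀ : H₀ ∉ B) {W : Set X} (hW : IsOpen W) (hWinv : ∀ g : G, g • W = W) (hWM : W ⊆ M)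
    (hWO : closure W ∩ M ⊆ O H₀)
    (hWle : ∀ H ∈ B, (closure W ∩ closure (V H) ∩ M).Nonempty → H₀ ≤ H ∨ H ≤ H₀)
    (hWcover : ∀ x ∈ M, s x = H₀ → x ∉ ⋃ H ∈ B, V H → x ∈ W) :
    IsGoodCover G M s O (insert H₀ B) (Function.update V H₀ W) := by
  have hself : Function.update V H₀ W H₀ = W := Function.update_self ..
  have hother : ∀ H ∈ B, Function.update V H₀ W H = V H := fun H hH =>
    Function.update_of_ne (ne_of_mem_of_not_mem hH hH₀) ..
  constructor
  · rintro H (rfl | hH)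
    · rwa [hself]
    · rw [hother H hH]; exact hV.isOpen H hH
  · rintro H (rfl | hH)
    · rwa [hself]
    · rw [hother H hH]; exact hV.subset H hH
  · rintro H (rfl | hH)
    · rwa [hself]
    · rw [hother H hH]; exact hV.smul_eq H hH
  · rintro H (rfl | hH)
    · rwa [hself]
    · rw [hother H hH]; exact hV.closure_inter_subset H hH
  · rintro H (rfl | hH) H' (rfl | hH') hne
    · exact Or.inl le_rfl
    · rw [hself, hother H' hH'] at hne
      exact hWle H' hH' hne
    · rw [hself, hother H hH, inter_comm (closure _)] at hne
      exact (hWle H hH hne).symm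
    · rw [hother H hH, hother H' hH'] at hne
      exact hV.le_or_le H hH H' hH' hne
  · intro x hxM hsx
    by_cases hx : x ∈ ⋃ H ∈ B, V H
    · obtain ⟨H, hH, hxH⟩ := mem_iUnion₂.1 hx
      exact ⟨H, mem_insert_of_mem _ hH, (hother H hH).symm ▸ hxH⟩
    · rcases hsx with hsx | hsx
      · exact ⟨H₀, mem_insert _ _, hself.symm ▸ hWcover x hxM hsx hx⟩
      · obtain ⟨H, hH, hxH⟩ := hV.exists_mem x hxM hsx
        exact absurd (mem_biUnion hH hxH) hx

end IsGoodCover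

section Induction

variable {ι : Type*} [PartialOrder ι] [TopologicalSpace X] [CompletelyNormalSpace X]
  [Group G] [TopologicalSpace G] [CompactSpace G] [MulAction G X] [ContinuousSMul G X]
  {M : Set X} {s : X → ι} {O : ι → Set X}

theorem IsGoodCover.exists_insert (hM : IsOpen M) (hMinv : ∀ g : G, g • M = M)
    (hs : ∀ (g : G) (x : X), s (g • x) = s x) (hsclosed : ∀ H, IsClosed {x | H ≤ s x})
    (hO : ∀ H, IsOpen (O H)) (hOle : ∀ H, ∀ x ∈ O H, s x ≤ H) (hmemO : ∀ x ∈ M, x ∈ O (s x))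
    {B : Set ι} (hB : B.Finite) {V : ι → Set X} (hV : IsGoodCover G M s O B V) {H₀ : ι}
    (hH₀ : H₀ ∉ B) (hup : ∀ x ∈ M, H₀ < s x → s x ∈ B) :
    ∃ V', IsGoodCover G M s O (insert H₀ B) V' := by
  classical
  set D := {x | x ∈ M ∧ H₀ ≤ s x} \ ⋃ H ∈ B, V H
  have hDs : ∀ x ∈ D, s x = H₀ := by
    rintro x ⟨⟨hxM, hle⟩, hx⟩
    by_contra hne
    obtain ⟨H, hH, hxH⟩ := hV.exists_mem x hxM (hup x hxM (lt_of_le_of_ne hle (Ne.symm hne)))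
    exact hx (mem_biUnion hH hxH)
  have hDclosure : closure D ∩ M ⊆ D := by
    rintro x ⟨hx, hxM⟩
    have hclosed : IsClosed ({x | H₀ ≤ s x} \ ⋃ H ∈ B, V H) :=
      (hsclosed H₀).sdiff (isOpen_biUnion hV.isOpen)
    obtain ⟨hle, hxV⟩ := closure_minimal (sdiff_subset_sdiff_left fun _ hy => hy.2) hclosed hx
    exact ⟨⟨hxM, hle⟩, hxV⟩
  have hDinv : ∀ g : G, ∀ x ∈ D, g • x ∈ D := by
    rintro g x ⟨⟨hxM, hle⟩, hx⟩
    refine ⟨⟨hMinv g ▸ smul_mem_smul_set hxM, (hs g x).symm ▸ hle⟩, fun hgx => hx ?_⟩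
    obtain ⟨H, hH, hgxH⟩ := mem_iUnion₂.1 hgx
    rw [← hV.smul_eq H hH g] at hgxH
    exact mem_biUnion hH ((smul_mem_smul_set_iff).1 hgxH)
  set P := O H₀ \ ⋃ H ∈ {H ∈ B | ¬ (H₀ ≤ H ∨ H ≤ H₀)}, closure (V H)
  have hPopen : IsOpen P :=
    (hO H₀).sdiff ((hB.subset (sep_subset _ _)).isClosed_biUnion fun _ _ => isClosed_closure)
  -- points of `closure (V H) ∩ M` have orbit type `≤ H`, since they lie in `O H`
  have hDP : D ⊆ P := by
    intro x hx
    refine ⟨hDs x hx ▸ hmemO x hx.1.1, fun hxP => ?_⟩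
    obtain ⟨H, ⟨hH, hinc⟩, hxH⟩ := mem_iUnion₂.1 hxP
    have := hOle H x (hV.closure_inter_subset H hH ⟨hxH, hx.1.1⟩)
    exact hinc (Or.inl (hDs x hx ▸ this))
  obtain ⟨W, hW, hWinv, hDW, hWM, hWP⟩ :=
    exists_smul_invariant_isOpen_subset_closure_inter_subset hM hPopen (fun x hx => hx.1.1)
      (hDclosure.trans hDP) hDinv
  refine ⟨_, hV.update hH₀ hW hWinv hWM (fun x hx => (hWP hx).1) ?_
    fun x hxM hsx hx => hDW ⟨⟨hxM, hsx.ge⟩, hx⟩⟩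
  rintro H hH ⟨x, ⟨hxW, hxH⟩, hxM⟩
  by_contra hinc
  exact (hWP ⟨hxW, hxM⟩).2 (mem_biUnion ⟨hH, hinc⟩ hxH)

theorem exists_isGoodCover (hM : IsOpen M) (hMinv : ∀ g : G, g • M = M)
    (hs : ∀ (g : G) (x : X), s (g • x) = s x) (hsclosed : ∀ H, IsClosed {x | H ≤ s x})
    (hO : ∀ H, IsOpen (O H)) (hOle : ∀ H, ∀ x ∈ O H, s x ≤ H) (hmemO : ∀ x ∈ M, x ∈ O (s x))
    (B : Finset ι) (hB : ∀ x ∈ M, ∀ H ∈ B, H ≤ s x → s x ∈ B) :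
    ∃ V, IsGoodCover G M s O B V := by
  classical
  induction B using Finset.strongInduction with
  | H B ih =>
  rcases B.eq_empty_or_nonempty with rfl | hne
  · exact ⟨fun _ => ∅, by simpa using IsGoodCover.empty⟩
  obtain ⟨H₀, hH₀⟩ := B.exists_minimal hne
  have hB' : ∀ x ∈ M, ∀ H ∈ B.erase H₀, H ≤ s x → s x ∈ B.erase H₀ := by
    intro x hxM H hH hle
    refine Finset.mem_erase.2 ⟨fun hsx => ?_, hB x hxM H (Finset.mem_of_mem_erase hH) hle⟩
    exact Finset.ne_of_mem_erase hH (hH₀.eq_of_le (Finset.mem_of_mem_erase hH) (hsx ▸ hle))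
  obtain ⟨V, hV⟩ := ih _ (Finset.erase_ssubset hH₀.prop) hB'
  have hup : ∀ x ∈ M, H₀ < s x → s x ∈ B.erase H₀ := fun x hxM hlt =>
    Finset.mem_erase.2 ⟨hlt.ne', hB x hxM H₀ hH₀.prop hlt.le⟩
  have := hV.exists_insert hM hMinv hs hsclosed hO hOle hmemO (B.erase H₀).finite_toSet
    (Finset.notMem_erase H₀ B) hup
  rwa [← Finset.coe_insert, Finset.insert_erase hH₀.prop] at this

end Induction

theorem isOpen_setOf_mem_and_le {ι : Type*} [Preorder ι] [TopologicalSpace X] {M : Set X}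
    {s : X → ι} {A : Set ι} (hM : IsOpen M) (hA : A.Finite) (hsA : ∀ x ∈ M, s x ∈ A)
    (hsclosed : ∀ H, IsClosed {x | H ≤ s x}) (H : ι) : IsOpen {x | x ∈ M ∧ s x ≤ H} := by
  have : {x | x ∈ M ∧ s x ≤ H} = M \ ⋃ K ∈ {K ∈ A | ¬ K ≤ H}, {x | K ≤ s x} := by
    ext x
    simp only [mem_ofPred_eq, mem_sdiff, mem_iUnion, exists_prop, not_exists, not_and]
    refine and_congr_right fun hxM => ⟨fun hle K hK hKx => hK.2 (hKx.trans hle), fun h => ?_⟩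
    by_contra hle
    exact h (s x) ⟨hsA x hxM, hle⟩ le_rfl
  rw [this]
  exact hM.sdiff ((hA.subset (sep_subset _ _)).isClosed_biUnion fun K _ => hsclosed K)

theorem isClosed_setOf_le_stabilizer [Group G] [MulAction G X] [TopologicalSpace X] [T2Space X]
    [ContinuousConstSMul G X] (H : Subgroup G) :
    IsClosed {x : X | H ≤ MulAction.stabilizer G x} := by
  have : {x : X | H ≤ MulAction.stabilizer G x} = ⋂ h ∈ H, {x | h • x = x} := by
    ext x
    simp [SetLike.le_def]
  rw [this]
  exact isClosed_biInter fun h _ => isClosed_eq (continuous_const_smul h) continuous_id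

end

theorem exists_good_open_covering_general
    {G : Type*} [CommGroup G] [TopologicalSpace G] [CompactSpace G]
    {X : Type*} [TopologicalSpace X] [TopologicalSpace.MetrizableSpace X]
    [MulAction G X] [ContinuousSMul G X]
    (M : Set X) (hMopen : IsOpen M) (hMinv : ∀ g : G, g • M = M)
    (A : Set (Subgroup G))
    (hAdef : A = {H : Subgroup G | ∃ x ∈ M, MulAction.stabilizer G x = H})
    (hAfin : A.Finite)
    (Vx : X → Set X)
    (hVx : ∀ x ∈ M, x ∈ Vx x ∧ IsOpen (Vx x)) :
    ∃ V : Subgroup G → Set X,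
      (∀ H ∈ A, IsOpen (V H)) ∧
      (∀ H ∈ A, V H ⊆ M) ∧
      (⋃ H ∈ A, V H) = M ∧
      (∀ H ∈ A, ∀ g : G, g • V H = V H) ∧
      (∀ H ∈ A, ∀ x ∈ V H, MulAction.stabilizer G x ≤ H) ∧
      (∀ H ∈ A, ∀ H' ∈ A, (V H ∩ V H').Nonempty → H ≤ H' ∨ H' ≤ H) ∧
      (∀ H ∈ A, V H ⊆ ⋃ x ∈ {x | x ∈ M ∧ MulAction.stabilizer G x = H}, Vx x) := by
  have hsA : ∀ x ∈ M, MulAction.stabilizer G x ∈ A := fun x hx => hAdef ▸ ⟨x, hx, rfl⟩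
  set O : Subgroup G → Set X := fun H => {x | x ∈ M ∧ MulAction.stabilizer G x ≤ H} ∩
    ⋃ y ∈ {y | y ∈ M ∧ MulAction.stabilizer G y = H}, Vx y
  have hO : ∀ H, IsOpen (O H) := fun H =>
    (isOpen_setOf_mem_and_le hMopen hAfin hsA isClosed_setOf_le_stabilizer H).inter
      (isOpen_biUnion fun y hy => (hVx y hy.1).2)
  obtain ⟨V, hV⟩ := exists_isGoodCover hMopen hMinv MulAction.stabilizer_smul_eq_right
    isClosed_setOf_le_stabilizer hO (fun _ _ hx => hx.1.2)
    (fun x hx => ⟨⟨hx, le_rfl⟩, mem_biUnion ⟨hx, rfl⟩ (hVx x hx).1⟩) hAfin.toFinset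
    (fun x hx _ _ _ => hAfin.mem_toFinset.2 (hsA x hx))
  rw [hAfin.coe_toFinset] at hV
  exact ⟨V, hV.isOpen, hV.subset, hV.biUnion_eq hsA, hV.smul_eq,
    fun H hH _ hx => (hV.subset_of_mem hH hx).1.2,
    fun H hH H' hH' => hV.le_or_le_of_nonempty hH hH',
    fun H hH _ hx => (hV.subset_of_mem hH hx).2⟩

/-- Existence of a good open covering for a compact abelian group action:
the open cover `{V_H}` indexed by the (finitely many) stabilizer subgroups is
`G`-invariant, shrinks stabilizers, is nested on overlaps, and can be chosen
subordinate to a given equivariant family of neighborhoods `V_x`. -/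
theorem exists_good_open_covering
    {G : Type*} [CommGroup G] [TopologicalSpace G] [IsTopologicalGroup G] [CompactSpace G]
    {X : Type*} [TopologicalSpace X] [CompactSpace X] [TopologicalSpace.MetrizableSpace X]
    [MulAction G X] [ContinuousSMul G X]
    (M : Set X) (hMopen : IsOpen M) (hMinv : ∀ g : G, g • M = M)
    (A : Set (Subgroup G))
    (hAdef : A = {H : Subgroup G | ∃ x ∈ M, MulAction.stabilizer G x = H})
    (hAfin : A.Finite)
    (Vx : X → Set X)
    (hVx : ∀ x ∈ M, x ∈ Vx x ∧ IsOpen (Vx x))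
    (hVxEquiv : ∀ (g : G), ∀ x ∈ M, Vx (g • x) = g • Vx x) :
    ∃ V : Subgroup G → Set X,
      (∀ H ∈ A, IsOpen (V H)) ∧
      (∀ H ∈ A, V H ⊆ M) ∧
      (⋃ H ∈ A, V H) = M ∧
      (∀ H ∈ A, ∀ g : G, g • V H = V H) ∧
      (∀ H ∈ A, ∀ x ∈ V H, MulAction.stabilizer G x ≤ H) ∧
      (∀ H ∈ A, ∀ H' ∈ A, (V H ∩ V H').Nonempty → H ≤ H' ∨ H' ≤ H) ∧
      (∀ H ∈ A, V H ⊆ ⋃ x ∈ {x | x ∈ M ∧ MulAction.stabilizer G x = H}, Vx x) :=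
  exists_good_open_covering_general M hMopen hMinv A hAdef hAfin Vx hVx
end

section
/- Let n ≥ 1 and let G be the free abelian group of rank n (i.e. ℤⁿ). Let χ : G → ℂˣ be a group homomorphism all of whose values lie on the unit circle (|χ(g)| = 1 for all g ∈ G), and let V be the one-dimensional complex representation of G on ℂ in which g acts as multiplication by χ(g). If the zeroth group cohomology H⁰(G; V) vanishes, then the group cohomology Hᵏ(G; V) vanishes for every k ≥ 0. -/
/-!
If `g` is central, acting by `g` on the bar resolution `P` of the trivial module is a chain map
lifting the identity, hence homotopic to the identity. On `Hom(P, A)` it acts as precomposition,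
which by equivariance equals postcomposition with `ρ_A(g)`. So when `ρ_A(g) = r` is a scalar,
`r • 𝟙` is homotopic to `𝟙` on the cochain complex, and if `r - 1` is a unit the complex is
contractible. For a character `χ` of `ℤⁿ`, `H⁰ = 0` says exactly that some `χ(g) ≠ 1`.
-/

/-- The one-dimensional representation of `ℤⁿ` on `ℂ` in which `g` acts as
multiplication by `χ g`. -/
noncomputable def unitaryCharacterRep {n : ℕ}
    (χ : Multiplicative (Fin n → ℤ) →* ℂˣ) :
    Representation ℂ (Multiplicative (Fin n → ℤ)) ℂ where
  toFun g := (χ g : ℂ) • LinearMap.id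
  map_one' := by
    simp [Module.End.one_eq_id]
  map_mul' g h := by
    refine LinearMap.ext fun x => ?_
    show ((χ (g * h) : ℂ)) • x = (χ g : ℂ) • ((χ h : ℂ) • x)
    rw [map_mul, Units.val_mul, mul_smul]

open CategoryTheory Limits

universe u

namespace HomologicalComplex

variable {V : Type*} [Category V] [Preadditive V] {R : Type*} [Ring R] [Linear R V]
  {ι : Type*} {c : ComplexShape ι}

lemma isZero_homology_of_homotopy_smul_id {K : HomologicalComplex V c} {r : R}
    (hr : IsUnit (r - 1)) (h : Homotopy (r • 𝟙 K) (𝟙 K)) (i : ι) [K.HasHomology i] :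
    IsZero (K.homology i) := by
  have hsub : Homotopy ((r - 1) • 𝟙 K) 0 :=
    (Homotopy.ofEq (by rw [sub_smul, one_smul])).trans (Homotopy.equivSubZero h)
  have h₀ : Homotopy (𝟙 K) 0 :=
    (Homotopy.ofEq (by rw [smul_smul, IsUnit.val_inv_mul, one_smul])).trans
      ((hsub.smul (hr.unit⁻¹ : Rˣ).val).trans (Homotopy.ofEq (smul_zero _)))
  rw [IsZero.iff_id_eq_zero, ← homologyMap_id, h₀.homologyMap_eq, homologyMap_zero]

end HomologicalComplex

namespace ChainComplex

variable {C : Type*} [Category C] [Abelian C] (R : Type*) [Ring R] [Linear R C]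
  {α : Type*} [AddRightCancelSemigroup α] [One α]

noncomputable def linearYonedaObjMap {X X' : ChainComplex C α} (φ : X ⟶ X') (Y : C) :
    X'.linearYonedaObj R Y ⟶ X.linearYonedaObj R Y :=
  (HomologicalComplex.unopFunctor _ _).map
    ((((linearYoneda R C).obj Y).rightOp.mapHomologicalComplex _).map φ).op

@[simp]
lemma linearYonedaObjMap_id (X : ChainComplex C α) (Y : C) :
    linearYonedaObjMap R (𝟙 X) Y = 𝟙 _ := by
  ext i f
  exact Category.id_comp f

noncomputable def homotopyLinearYonedaObjMap {X X' : ChainComplex C α} {φ ψ : X ⟶ X'}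
    (h : Homotopy φ ψ) (Y : C) :
    Homotopy (linearYonedaObjMap R φ Y) (linearYonedaObjMap R ψ Y) :=
  (((linearYoneda R C).obj Y).rightOp.mapHomotopy h).unop

end ChainComplex

namespace HomologicalComplex

variable {k G : Type*} [CommRing k] [CommGroup G] {ι : Type*} {c : ComplexShape ι}

def applyAsHom (K : HomologicalComplex (Rep k G) c) (g : G) : K ⟶ K where
  f i := (K.X i).applyAsHom g
  comm' _ _ _ := Rep.applyAsHom_comm _ g

end HomologicalComplex

namespace Rep

variable {k G : Type u} [CommRing k] [CommGroup G]

lemma applyAsHom_eq_smul_id {A : Rep k G} {g : G} {r : k} (h : A.ρ g = r • LinearMap.id) :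
    A.applyAsHom g = r • 𝟙 A := by
  ext x
  exact LinearMap.congr_fun h x

lemma applyAsHom_comp_π (P : ProjectiveResolution (trivial k G k)) (g : G) :
    P.complex.applyAsHom g ≫ P.π = P.π := by
  refine HomologicalComplex.hom_ext _ _ fun i => ?_
  match i with
  | 0 => exact (applyAsHom_comm _ g).trans (Category.comp_id _)
  | i + 1 => exact (HomologicalComplex.isZero_single_obj_X _ 0 _ (i + 1) (by simp)).eq_of_tgt _ _

noncomputable def homotopyApplyAsHomId (P : ProjectiveResolution (trivial k G k)) (g : G) :
    Homotopy (P.complex.applyAsHom g) (𝟙 P.complex) :=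
  ProjectiveResolution.liftHomotopy (𝟙 (trivial k G k)) _ _
    (by rw [CategoryTheory.Functor.map_id, Category.comp_id, applyAsHom_comp_π])
    (by rw [CategoryTheory.Functor.map_id, Category.comp_id, Category.id_comp])

lemma linearYonedaObjMap_applyAsHom {α : Type*} [AddRightCancelSemigroup α] [One α]
    (K : ChainComplex (Rep k G) α) {A : Rep k G} {g : G} {r : k}
    (h : A.ρ g = r • LinearMap.id) :
    ChainComplex.linearYonedaObjMap k (K.applyAsHom g) A = r • 𝟙 _ := by
  ext i (f : K.X i ⟶ A)
  change (K.X i).applyAsHom g ≫ f = r • f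
  rw [applyAsHom_comm, applyAsHom_eq_smul_id h, Linear.comp_smul, Category.comp_id]

end Rep

theorem isZero_groupCohomology_of_ρ_eq_smul {k G : Type u} [CommRing k] [CommGroup G]
    (A : Rep k G) {g : G} {r : k} (h : A.ρ g = r • LinearMap.id) (hr : IsUnit (r - 1))
    (n : ℕ) : IsZero (groupCohomology A n) := by
  let P := Rep.barResolution k G
  have htpy := ChainComplex.homotopyLinearYonedaObjMap k (Rep.homotopyApplyAsHomId P g) A
  rw [Rep.linearYonedaObjMap_applyAsHom _ h, ChainComplex.linearYonedaObjMap_id] at htpy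
  exact (HomologicalComplex.isZero_homology_of_homotopy_smul_id hr htpy n).of_iso
    (groupCohomologyIso A n P)

theorem exists_ne_one_of_subsingleton_groupCohomology_zero {n : ℕ}
    {χ : Multiplicative (Fin n → ℤ) →* ℂˣ}
    (h0 : Subsingleton (groupCohomology (Rep.of (unitaryCharacterRep χ)) 0)) :
    ∃ g, (χ g : ℂ) ≠ 1 := by
  by_contra! hχ
  have hinv : (1 : ℂ) ∈ (unitaryCharacterRep χ).invariants := fun g => by
    change (χ g : ℂ) • (1 : ℂ) = 1
    rw [hχ g, one_smul]
  have : Subsingleton (unitaryCharacterRep χ).invariants :=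
    (groupCohomology.H0Iso (Rep.of (unitaryCharacterRep χ))).toLinearEquiv.toEquiv.symm
      |>.subsingleton
  rw [Submodule.eq_bot_of_subsingleton (p := (unitaryCharacterRep χ).invariants),
    Submodule.mem_bot] at hinv
  exact one_ne_zero hinv

theorem groupCohomology_vanishing_of_H0_vanishing_general {n : ℕ}
    (χ : Multiplicative (Fin n → ℤ) →* ℂˣ)
    (h0 : Subsingleton (groupCohomology (Rep.of (unitaryCharacterRep χ)) 0)) :
    ∀ k : ℕ, Subsingleton (groupCohomology (Rep.of (unitaryCharacterRep χ)) k) := by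
  intro m
  obtain ⟨g, hg⟩ := exists_ne_one_of_subsingleton_groupCohomology_zero h0
  exact ModuleCat.subsingleton_of_isZero
    (isZero_groupCohomology_of_ρ_eq_smul _ (g := g) rfl (sub_ne_zero.2 hg).isUnit m)

/-- Vanishing of cohomology: if `χ : ℤⁿ → ℂˣ` is a unitary character and the
zeroth group cohomology of the associated one-dimensional representation
vanishes, then all its group cohomology vanishes. -/
theorem groupCohomology_vanishing_of_H0_vanishing {n : ℕ} (hn : 1 ≤ n)
    (χ : Multiplicative (Fin n → ℤ) →* ℂˣ)
    (hχ : ∀ g, ‖((χ g : ℂ))‖ = 1)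
    (h0 : Subsingleton (groupCohomology (Rep.of (unitaryCharacterRep χ)) 0)) :
    ∀ k : ℕ, Subsingleton (groupCohomology (Rep.of (unitaryCharacterRep χ)) k) :=
  groupCohomology_vanishing_of_H0_vanishing_general χ h0
end

section
/- Let M, U_α, U_β, U_{αβ} be sets, let V_α, V_β be subsets of M, and let π_α : V_α → U_α, π_β : V_β → U_β, π_{αβ} : V_α ∩ V_β → U_{αβ}, p^α : U_{αβ} → U_α, p^β : U_{αβ} → U_β be maps (all preimages below are taken inside the domain of the respective map). Assume: (i) p^α ∘ π_{αβ} = π_α and p^β ∘ π_{αβ} = π_β on V_α ∩ V_β; (ii) π_{αβ} is surjective onto U_{αβ}; (iii) π_α⁻¹(π_α(V'_α)) = V'_α and π_β⁻¹(π_β(V'_β)) = V'_β for given subsets V'_α ⊆ V_α, V'_β ⊆ V_β; (iv) π_β⁻¹(π_β(V'_α ∩ V_β)) = V'_α ∩ V_β and π_α⁻¹(π_α(V'_β ∩ V_α)) = V'_β ∩ V_α; and (v) a subset C ⊆ M satisfies V'_α ∩ C = π_α⁻¹(π_α(V'_α ∩ C)) and V'_β ∩ C = π_β⁻¹(π_β(V'_β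 ∩ C)). Then: (1) π_α⁻¹(π_α(C ∩ V'_α ∩ V'_β)) = C ∩ V'_α ∩ V'_β (and the same with α and β interchanged); (2) π_{αβ}⁻¹(π_{αβ}(C ∩ V'_α ∩ V'_β)) = C ∩ V'_α ∩ V'_β; (3) (p^α)⁻¹(p^α(π_{αβ}(C ∩ V'_α ∩ V'_β))) = π_{αβ}(C ∩ V'_α ∩ V'_β). -/
/-- Restriction of a compatible fibration to an admissible subset: the three
saturation identities. -/
theorem compatibleFibration_restrict_admissible
    {M Ua Ub Uab : Type*}
    (Va Vb V'a V'b C : Set M)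
    (πa : M → Ua) (πb : M → Ub) (πab : M → Uab)
    (pa : Uab → Ua) (pb : Uab → Ub)
    (hV'a : V'a ⊆ Va) (hV'b : V'b ⊆ Vb)
    -- (i) the triangles commute on Vα ∩ Vβ
    (hcomm : ∀ x ∈ Va ∩ Vb, pa (πab x) = πa x ∧ pb (πab x) = πb x)
    -- (ii) παβ : Vα ∩ Vβ → Uαβ is surjective
    (hsurj : ∀ u : Uab, ∃ x ∈ Va ∩ Vb, πab x = u)
    -- (iii) the covering {V'α} is saturated
    (hsatA : Va ∩ πa ⁻¹' (πa '' V'a) = V'a)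
    (hsatB : Vb ∩ πb ⁻¹' (πb '' V'b) = V'b)
    -- (iv) admissibility of the covering on overlaps
    (hadmA : Vb ∩ πb ⁻¹' (πb '' (V'a ∩ Vb)) = V'a ∩ Vb)
    (hadmB : Va ∩ πa ⁻¹' (πa '' (V'b ∩ Va)) = V'b ∩ Va)
    -- (v) C is admissible
    (hCa : Va ∩ πa ⁻¹' (πa '' (V'a ∩ C)) = V'a ∩ C)
    (hCb : Vb ∩ πb ⁻¹' (πb '' (V'b ∩ C)) = V'b ∩ C) :
    (Va ∩ πa ⁻¹' (πa '' (C ∩ V'a ∩ V'b)) = C ∩ V'a ∩ V'b ∧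
      Vb ∩ πb ⁻¹' (πb '' (C ∩ V'a ∩ V'b)) = C ∩ V'a ∩ V'b) ∧
    (Va ∩ Vb) ∩ πab ⁻¹' (πab '' (C ∩ V'a ∩ V'b)) = C ∩ V'a ∩ V'b ∧
    pa ⁻¹' (pa '' (πab '' (C ∩ V'a ∩ V'b))) = πab '' (C ∩ V'a ∩ V'b) := by

  -- key pointwise lemma for πa
  have keyA : ∀ x ∈ Va, ∀ y ∈ C ∩ V'a ∩ V'b, πa x = πa y → x ∈ C ∩ V'a ∩ V'b := by
    intro x hx y hy hxy
    obtain ⟨⟨hyC, hya⟩, hyb⟩ := hy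
    have h1 : x ∈ V'a ∩ C := by
      rw [← hCa]; exact ⟨hx, ⟨y, ⟨hya, hyC⟩, hxy.symm⟩⟩
    have h2 : x ∈ V'b ∩ Va := by
      rw [← hadmB]; exact ⟨hx, ⟨y, ⟨hyb, hV'a hya⟩, hxy.symm⟩⟩
    exact ⟨⟨h1.2, h1.1⟩, h2.1⟩
  have keyB : ∀ x ∈ Vb, ∀ y ∈ C ∩ V'a ∩ V'b, πb x = πb y → x ∈ C ∩ V'a ∩ V'b := by
    intro x hx y hy hxy
    obtain ⟨⟨hyC, hya⟩, hyb⟩ := hy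
    have h1 : x ∈ V'b ∩ C := by
      rw [← hCb]; exact ⟨hx, ⟨y, ⟨hyb, hyC⟩, hxy.symm⟩⟩
    have h2 : x ∈ V'a ∩ Vb := by
      rw [← hadmA]; exact ⟨hx, ⟨y, ⟨hya, hV'b hyb⟩, hxy.symm⟩⟩
    exact ⟨⟨h1.2, h2.1⟩, h1.1⟩
  have hsub : C ∩ V'a ∩ V'b ⊆ Va ∩ Vb := fun x hx => ⟨hV'a hx.1.2, hV'b hx.2⟩
  have part1a : Va ∩ πa ⁻¹' (πa '' (C ∩ V'a ∩ V'b)) = C ∩ V'a ∩ V'b := by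
    apply Set.Subset.antisymm
    · rintro x ⟨hx, y, hy, hxy⟩
      exact keyA x hx y hy hxy.symm
    · intro x hx
      exact ⟨hV'a hx.1.2, ⟨x, hx, rfl⟩⟩
  have part1b : Vb ∩ πb ⁻¹' (πb '' (C ∩ V'a ∩ V'b)) = C ∩ V'a ∩ V'b := by
    apply Set.Subset.antisymm
    · rintro x ⟨hx, y, hy, hxy⟩
      exact keyB x hx y hy hxy.symm
    · intro x hx
      exact ⟨hV'b hx.2, ⟨x, hx, rfl⟩⟩
  refine ⟨⟨part1a, part1b⟩, ?_, ?_⟩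
  · apply Set.Subset.antisymm
    · rintro x ⟨hx, y, hy, hxy⟩
      have hπa : πa x = πa y := by
        have h1 := (hcomm x hx).1
        have h2 := (hcomm y (hsub hy)).1
        rw [← h1, ← h2, hxy]
      exact keyA x hx.1 y hy hπa
    · intro x hx
      exact ⟨hsub hx, ⟨x, hx, rfl⟩⟩
  · apply Set.Subset.antisymm
    · rintro u ⟨v, ⟨y, hy, hyv⟩, huv⟩
      obtain ⟨x, hx, hxu⟩ := hsurj u
      have hπa : πa x = πa y := by
        have h1 := (hcomm x hx).1
        have h2 := (hcomm y (hsub hy)).1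
        rw [← h1, ← h2, hxu, hyv]; exact huv.symm
      exact ⟨x, keyA x hx.1 y hy hπa, hxu⟩
    · intro u hu
      exact ⟨u, hu, rfl⟩
end

section
/- Let H be an inner product space over ℝ or ℂ, let B be a nonempty finite index set, and for each β ∈ B let D_β : H → H be a symmetric linear operator (⟪D_β u, v⟫ = ⟪u, D_β v⟫ for all u, v ∈ H). Assume: (a) each D_β is injective; and (b) for all β ≠ β' and all u ∈ H, the anticommutator is nonnegative: ⟪(D_β ∘ D_{β'} + D_{β'} ∘ D_β) u, u⟫ ≥ 0 (this inner product is automatically real). Then for every family (t_β)_{β∈B} of nonnegative real numbers with t_{β₀} > 0 for at least one β₀, the operator Σ_β t_β D_β is injective. -/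
/-!
Pair the equation `(∑ β, t β • D β) u = 0` with `D β₀ u`. By symmetry, the real part of
`⟪D β u, D β₀ u⟫` is half that of `⟪(D β D β₀ + D β₀ D β) u, u⟫`, hence nonnegative for
`β ≠ β₀`, and it is `‖D β₀ u‖²` for `β = β₀`. So `0 ≥ t β₀ ‖D β₀ u‖²`, forcing `D β₀ u = 0`,
and `u = 0` by injectivity of `D β₀`.
-/

section

open RCLike

variable {𝕜 H : Type*} [RCLike 𝕜] [NormedAddCommGroup H] [InnerProductSpace 𝕜 H]

theorem LinearMap.IsSymmetric.re_inner_anticomm_apply_self {A C : H →ₗ[𝕜] H}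
    (hA : A.IsSymmetric) (hC : C.IsSymmetric) (u : H) :
    re (inner 𝕜 (A (C u) + C (A u)) u : 𝕜) = 2 * re (inner 𝕜 (A u) (C u) : 𝕜) := by
  rw [inner_add_left, map_add, hA (C u) u, hC (A u) u, inner_re_symm (𝕜 := 𝕜) (C u)]
  ring

theorem re_inner_sum_smul_apply {B : Type*} [Fintype B] (D : B → H →ₗ[𝕜] H) (t : B → ℝ)
    (u v : H) :
    re (inner 𝕜 ((∑ β, (t β : 𝕜) • D β) u) v : 𝕜) = ∑ β, t β * re (inner 𝕜 (D β u) v : 𝕜) := by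
  simp only [LinearMap.sum_apply, LinearMap.smul_apply, sum_inner, map_sum, inner_smul_left,
    conj_ofReal, re_ofReal_mul]

theorem mul_norm_sq_le_re_inner_sum_smul_apply {B : Type*} [Fintype B]
    (D : B → H →ₗ[𝕜] H) (hsymm : ∀ β, (D β).IsSymmetric)
    (hanti : ∀ β β', β ≠ β' → ∀ u : H,
      0 ≤ re (inner 𝕜 ((D β) ((D β') u) + (D β') ((D β) u)) u : 𝕜))
    (t : B → ℝ) (ht : ∀ β, 0 ≤ t β) (β₀ : B) (u : H) :
    t β₀ * ‖D β₀ u‖ ^ 2 ≤ re (inner 𝕜 ((∑ β, (t β : 𝕜) • D β) u) (D β₀ u) : 𝕜) := by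
  have cross_nonneg : ∀ β, 0 ≤ re (inner 𝕜 (D β u) (D β₀ u) : 𝕜) := by
    intro β
    rcases eq_or_ne β β₀ with rfl | hne
    · exact inner_self_nonneg
    · have := hanti β β₀ hne u
      rw [(hsymm β).re_inner_anticomm_apply_self (hsymm β₀)] at this
      linarith
  calc t β₀ * ‖D β₀ u‖ ^ 2 = t β₀ * re (inner 𝕜 (D β₀ u) (D β₀ u) : 𝕜) := by
        rw [inner_self_eq_norm_sq]
    _ ≤ ∑ β, t β * re (inner 𝕜 (D β u) (D β₀ u) : 𝕜) :=
        Finset.single_le_sum (fun β _ => mul_nonneg (ht β) (cross_nonneg β))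
          (Finset.mem_univ β₀)
    _ = re (inner 𝕜 ((∑ β, (t β : 𝕜) • D β) u) (D β₀ u) : 𝕜) :=
        (re_inner_sum_smul_apply D t u _).symm

end

theorem injective_nonneg_combination_of_stronglyAcyclic_general
    {𝕜 H B : Type*} [RCLike 𝕜] [NormedAddCommGroup H] [InnerProductSpace 𝕜 H]
    [Fintype B]
    (D : B → H →ₗ[𝕜] H)
    (hsymm : ∀ β, (D β).IsSymmetric)
    (hinj : ∀ β, Function.Injective (D β))
    (hanti : ∀ β β', β ≠ β' → ∀ u : H,
      0 ≤ RCLike.re (inner 𝕜 ((D β) ((D β') u) + (D β') ((D β) u)) u : 𝕜))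
    (t : B → ℝ) (ht : ∀ β, 0 ≤ t β) (ht0 : ∃ β₀, 0 < t β₀) :
    Function.Injective ⇑(∑ β, (t β : 𝕜) • D β) := by
  obtain ⟨β₀, hβ₀⟩ := ht0
  rw [injective_iff_map_eq_zero]
  intro u hu
  have hle := mul_norm_sq_le_re_inner_sum_smul_apply D hsymm hanti t ht β₀ u
  rw [hu, inner_zero_left, map_zero] at hle
  have hD : D β₀ u = 0 := by simpa using nonpos_of_mul_nonpos_right hle hβ₀
  exact hinj β₀ (hD.trans (map_zero _).symm)

/-- A strongly acyclic system is acyclic: if the `D β` are symmetric injective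
operators with nonnegative pairwise anticommutators, then any nonnegative linear
combination with at least one positive coefficient is injective. -/
theorem injective_nonneg_combination_of_stronglyAcyclic
    {𝕜 H B : Type*} [RCLike 𝕜] [NormedAddCommGroup H] [InnerProductSpace 𝕜 H]
    [Fintype B] [Nonempty B]
    (D : B → H →ₗ[𝕜] H)
    (hsymm : ∀ β, (D β).IsSymmetric)
    (hinj : ∀ β, Function.Injective (D β))
    (hanti : ∀ β β', β ≠ β' → ∀ u : H,
      0 ≤ RCLike.re (inner 𝕜 ((D β) ((D β') u) + (D β') ((D β) u)) u : 𝕜))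
    (t : B → ℝ) (ht : ∀ β, 0 ≤ t β) (ht0 : ∃ β₀, 0 < t β₀) :
    Function.Injective ⇑(∑ β, (t β : 𝕜) • D β) :=
  injective_nonneg_combination_of_stronglyAcyclic_general D hsymm hinj hanti t ht ht0
end

section
/- Let M be a topological space and A a finite index set; for each α ∈ A let U_α be a set, π_α : M → U_α a map, and V''_α ⊆ M a subset satisfying π_α⁻¹(π_α(V''_α)) = V''_α. Let h : M → ℝ and H : M → ℝ be functions such that for every x ∈ M there exist α ∈ A with x ∈ V''_α and points y₁, y₂ ∈ π_α⁻¹(π_α(x)) with h(y₁) ≤ H(x) ≤ h(y₂). Let J ⊆ ℝ be an order-connected set (an interval), let D ⊆ M, and define K(D) := ⋃_{α∈A} π_α⁻¹(π_α(D ∩ closure(V''_α))). If K(D) ⊆ h⁻¹(J), then D ⊆ H⁻¹(J). -/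
/-- The lemma on the saturation `K(D)`: if the averaged function `H` is sandwiched
fiberwise by `h`, `J` is an interval and `K(D) ⊆ h⁻¹(J)`, then `D ⊆ H⁻¹(J)`. -/
theorem subset_preimage_of_saturation_subset
    {M : Type*} [TopologicalSpace M] {A : Type*} [Finite A]
    {U : A → Type*} (π : (α : A) → M → U α)
    (V'' : A → Set M)
    (hsat : ∀ α, (π α) ⁻¹' (π α '' V'' α) = V'' α)
    (h H : M → ℝ)
    (hsandwich : ∀ x : M, ∃ α, x ∈ V'' α ∧
      ∃ y₁, π α y₁ = π α x ∧ ∃ y₂, π α y₂ = π α x ∧ h y₁ ≤ H x ∧ H x ≤ h y₂)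
    (J : Set ℝ) (hJ : J.OrdConnected)
    (D : Set M)
    (hK : (⋃ α, (π α) ⁻¹' (π α '' (D ∩ closure (V'' α)))) ⊆ h ⁻¹' J) :
    D ⊆ H ⁻¹' J := by
  intro x hxD
  obtain ⟨α, hxV, y₁, hy₁, y₂, hy₂, h₁, h₂⟩ := hsandwich x
  have hxDc : x ∈ D ∩ closure (V'' α) := ⟨hxD, subset_closure hxV⟩
  have mem : ∀ y, π α y = π α x → h y ∈ J := fun y hy =>
    hK (Set.mem_iUnion.2 ⟨α, ⟨x, hxDc, hy.symm⟩⟩)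
  exact hJ.out (mem y₁ hy₁) (mem y₂ hy₂) ⟨h₁, h₂⟩
end

section
/- Let M be a finite-dimensional second-countable Hausdorff smooth manifold, A a finite index set, and (V'_α)_{α∈A} an open cover of M; for each α let U_α be a set and π_α : M → U_α a map. Call a function f : M → ℝ admissible if for every α and all x, y ∈ V'_α with π_α(x) = π_α(y) one has f(x) = f(y). Suppose I is a linear operator taking smooth real-valued functions on M to smooth real-valued functions on M such that: (1) I(f) is admissible for every smooth f; (2) I(f) = f whenever f is constant; (3) if f ≥ 0 everywhere then I(f) ≥ 0 everywhere; and (4) if the support of f is contained in V'_α for some α, then the support of I(f) is contained in V'_α. Then there exists a family (ρ_α)_{α∈A} of smooth functions ρ_α : M → ℝ such that each ρ_α is admissible, the support of ρ_α is contained in V'_α for each α, and Σ_{α∈A} ρ_α² = 1 on M. -/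
open scoped Manifold
open Set

/-!
Average a smooth partition of unity `φ` subordinate to `V'`: the functions `g α = I (φ α)` are
smooth, admissible and supported in `V' α`, and by additivity and `I 1 = 1` they still sum to `1`.
Hence `∑ α, g α ^ 2` never vanishes, and `ρ α = g α / √(∑ β, g β ^ 2)` keeps all three properties
while making the squares sum to `1`.
-/

section L2Normalize

variable {A M : Type*} [Fintype A]

noncomputable def l2Normalize (g : A → M → ℝ) (α : A) (x : M) : ℝ :=
  g α x / √(∑ β, g β x ^ 2)

variable (g : A → M → ℝ)

theorem sum_sq_ne_zero_of_sum_eq_one {x : M} (h : ∑ β, g β x = 1) : ∑ β, g β x ^ 2 ≠ 0 := by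
  intro h0
  have hzero : ∀ β, g β x = 0 := by
    simpa [sq, Finset.sum_mul_self_eq_zero_iff] using h0
  simp [hzero] at h

theorem sum_l2Normalize_sq {x : M} (h : ∑ β, g β x ^ 2 ≠ 0) :
    ∑ α, l2Normalize g α x ^ 2 = 1 := by
  have hnonneg : 0 ≤ ∑ β, g β x ^ 2 := by positivity
  simp only [l2Normalize, div_pow, Real.sq_sqrt hnonneg, ← Finset.sum_div, div_self h]

theorem tsupport_l2Normalize_subset [TopologicalSpace M] (α : A) :
    tsupport (l2Normalize g α) ⊆ tsupport (g α) :=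
  closure_mono fun x hx => by
    simp only [Function.mem_support, l2Normalize] at hx ⊢
    exact (div_ne_zero_iff.1 hx).1

theorem l2Normalize_eq_of_forall_eq {x y : M} (h : ∀ β, g β x = g β y) (α : A) :
    l2Normalize g α x = l2Normalize g α y := by
  simp only [l2Normalize, h]

theorem contMDiff_l2Normalize {E H : Type*} [NormedAddCommGroup E] [NormedSpace ℝ E]
    [TopologicalSpace H] {I : ModelWithCorners ℝ E H} [TopologicalSpace M] [ChartedSpace H M]
    {k : WithTop ℕ∞} (hg : ∀ α, ContMDiff I 𝓘(ℝ) k (g α)) (h : ∀ x, ∑ β, g β x ^ 2 ≠ 0) (α : A) :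
    ContMDiff I 𝓘(ℝ) k (l2Normalize g α) := by
  have hS : ContMDiff I 𝓘(ℝ) k fun x => ∑ β, g β x ^ 2 := ContMDiff.sum fun β _ => (hg β).pow 2
  have hpos : ∀ x, 0 < ∑ β, g β x ^ 2 := fun x => lt_of_le_of_ne (by positivity) (h x).symm
  have hsqrt : ContMDiff I 𝓘(ℝ) k fun x => √(∑ β, g β x ^ 2) := fun x =>
    ((Real.contDiffAt_sqrt (h x)).contMDiffAt.comp x (hS x)).contMDiffWithinAt
  exact (hg α).div₀ hsqrt fun x => (Real.sqrt_pos.2 (hpos x)).ne'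

end L2Normalize

theorem SmoothPartitionOfUnity.sum_map_apply_eq_one {ι E H M : Type*} [Fintype ι]
    [NormedAddCommGroup E] [NormedSpace ℝ E] [TopologicalSpace H]
    {I : ModelWithCorners ℝ E H} [TopologicalSpace M] [ChartedSpace H M]
    (φ : SmoothPartitionOfUnity ι I M univ) (T : (M → ℝ) → (M → ℝ))
    (hadd : ∀ f g : M → ℝ, ContMDiff I 𝓘(ℝ) (⊤ : ℕ∞) f → ContMDiff I 𝓘(ℝ) (⊤ : ℕ∞) g →
      T (f + g) = T f + T g)
    (hzero : T 0 = 0) (hone : T 1 = 1) (x : M) :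
    ∑ i, T (φ i) x = 1 := by
  let T' : ContMDiffMap I 𝓘(ℝ) M ℝ (⊤ : ℕ∞) →+ (M → ℝ) :=
    { toFun f := T f
      map_zero' := hzero
      map_add' f g := hadd f g f.contMDiff g.contMDiff }
  have hφ : ∑ i, φ i = 1 := by
    ext y
    rw [← ContMDiffMap.coeFnAddMonoidHom_apply, map_sum]
    simpa [finsum_eq_sum_of_fintype] using φ.sum_eq_one (mem_univ y)
  have h := congrFun (map_sum T' φ Finset.univ) x
  rw [hφ, Finset.sum_apply] at h
  change T 1 x = ∑ i, T (φ i) x at h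
  rw [← h, hone, Pi.one_apply]

theorem exists_admissible_partition_of_unity_general
    {n : ℕ} {M : Type*} [TopologicalSpace M]
    [ChartedSpace (EuclideanSpace ℝ (Fin n)) M] [IsManifold (𝓡 n) (⊤ : ℕ∞) M]
    [T2Space M] [SecondCountableTopology M]
    {A : Type*} [Fintype A]
    (V' : A → Set M) (hopen : ∀ α, IsOpen (V' α)) (hcover : (⋃ α, V' α) = univ)
    {U : A → Type*} (π : (α : A) → M → U α)
    (I : (M → ℝ) → (M → ℝ))
    -- `I` is linear on smooth functions
    (hIadd : ∀ f g : M → ℝ, ContMDiff (𝓡 n) 𝓘(ℝ) (⊤ : ℕ∞) f → ContMDiff (𝓡 n) 𝓘(ℝ) (⊤ : ℕ∞) g →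
      I (f + g) = I f + I g)
    -- `I` takes smooth functions to smooth functions
    (hIsmooth : ∀ f : M → ℝ, ContMDiff (𝓡 n) 𝓘(ℝ) (⊤ : ℕ∞) f → ContMDiff (𝓡 n) 𝓘(ℝ) (⊤ : ℕ∞) (I f))
    -- (1) `I f` is admissible
    (hIadm : ∀ f : M → ℝ, ContMDiff (𝓡 n) 𝓘(ℝ) (⊤ : ℕ∞) f →
      ∀ α, ∀ x ∈ V' α, ∀ y ∈ V' α, π α x = π α y → I f x = I f y)
    -- (2) `I` fixes constants
    (hIconst : ∀ c : ℝ, I (fun _ => c) = fun _ => c)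
    -- (4) `I` preserves supports inside the `V'_α`
    (hIsupp : ∀ (f : M → ℝ) (α : A), ContMDiff (𝓡 n) 𝓘(ℝ) (⊤ : ℕ∞) f →
      tsupport f ⊆ V' α → tsupport (I f) ⊆ V' α) :
    ∃ ρ : A → M → ℝ,
      (∀ α, ContMDiff (𝓡 n) 𝓘(ℝ) (⊤ : ℕ∞) (ρ α)) ∧
      (∀ α β, ∀ x ∈ V' β, ∀ y ∈ V' β, π β x = π β y → ρ α x = ρ α y) ∧
      (∀ α, tsupport (ρ α) ⊆ V' α) ∧
      (∀ x, ∑ α, (ρ α x) ^ 2 = 1) := by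
  have : LocallyCompactSpace M := ChartedSpace.locallyCompactSpace (EuclideanSpace ℝ (Fin n)) M
  obtain ⟨φ, hφ⟩ := SmoothPartitionOfUnity.exists_isSubordinate (𝓡 n) isClosed_univ V' hopen
    hcover.symm.subset
  set g : A → M → ℝ := fun α => I (φ α)
  have hg : ∀ α, ContMDiff (𝓡 n) 𝓘(ℝ) (⊤ : ℕ∞) (g α) := fun α => hIsmooth _ (φ α).contMDiff
  have hne : ∀ x, ∑ α, g α x ^ 2 ≠ 0 := fun x =>
    sum_sq_ne_zero_of_sum_eq_one g (φ.sum_map_apply_eq_one I hIadd (hIconst 0) (hIconst 1) x)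
  refine ⟨l2Normalize g, contMDiff_l2Normalize g hg hne, ?_, ?_,
    fun x => sum_l2Normalize_sq g (hne x)⟩
  · intro α β x hx y hy hxy
    exact l2Normalize_eq_of_forall_eq g (fun γ => hIadm _ (φ γ).contMDiff β x hx y hy hxy) α
  · exact fun α => (tsupport_l2Normalize_subset g α).trans (hIsupp _ α (φ α).contMDiff (hφ α))

/-- Existence of an admissible partition of unity: given a finite open cover
`{V'_α}` of a smooth manifold `M`, fibration maps `π_α`, and an averaging
operation `I` on smooth functions, there is a family of smooth admissible
functions `ρ_α` supported in `V'_α` with `∑ ρ_α² = 1`. -/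
theorem exists_admissible_partition_of_unity
    {n : ℕ} {M : Type*} [TopologicalSpace M]
    [ChartedSpace (EuclideanSpace ℝ (Fin n)) M] [IsManifold (𝓡 n) (⊤ : ℕ∞) M]
    [T2Space M] [SecondCountableTopology M]
    {A : Type*} [Fintype A]
    (V' : A → Set M) (hopen : ∀ α, IsOpen (V' α)) (hcover : (⋃ α, V' α) = univ)
    {U : A → Type*} (π : (α : A) → M → U α)
    (I : (M → ℝ) → (M → ℝ))
    -- `I` is linear on smooth functions
    (hIadd : ∀ f g : M → ℝ, ContMDiff (𝓡 n) 𝓘(ℝ) (⊤ : ℕ∞) f → ContMDiff (𝓡 n) 𝓘(ℝ) (⊤ : ℕ∞) g →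
      I (f + g) = I f + I g)
    (hIsmul : ∀ (c : ℝ) (f : M → ℝ), ContMDiff (𝓡 n) 𝓘(ℝ) (⊤ : ℕ∞) f → I (c • f) = c • I f)
    -- `I` takes smooth functions to smooth functions
    (hIsmooth : ∀ f : M → ℝ, ContMDiff (𝓡 n) 𝓘(ℝ) (⊤ : ℕ∞) f → ContMDiff (𝓡 n) 𝓘(ℝ) (⊤ : ℕ∞) (I f))
    -- (1) `I f` is admissible
    (hIadm : ∀ f : M → ℝ, ContMDiff (𝓡 n) 𝓘(ℝ) (⊤ : ℕ∞) f →
      ∀ α, ∀ x ∈ V' α, ∀ y ∈ V' α, π α x = π α y → I f x = I f y)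
    -- (2) `I` fixes constants
    (hIconst : ∀ c : ℝ, I (fun _ => c) = fun _ => c)
    -- (3) `I` preserves nonnegativity
    (hInonneg : ∀ f : M → ℝ, ContMDiff (𝓡 n) 𝓘(ℝ) (⊤ : ℕ∞) f → (∀ x, 0 ≤ f x) →
      ∀ x, 0 ≤ I f x)
    -- (4) `I` preserves supports inside the `V'_α`
    (hIsupp : ∀ (f : M → ℝ) (α : A), ContMDiff (𝓡 n) 𝓘(ℝ) (⊤ : ℕ∞) f →
      tsupport f ⊆ V' α → tsupport (I f) ⊆ V' α) :
    ∃ ρ : A → M → ℝ,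
      (∀ α, ContMDiff (𝓡 n) 𝓘(ℝ) (⊤ : ℕ∞) (ρ α)) ∧
      (∀ α β, ∀ x ∈ V' β, ∀ y ∈ V' β, π β x = π β y → ρ α x = ρ α y) ∧
      (∀ α, tsupport (ρ α) ⊆ V' α) ∧
      (∀ x, ∑ α, (ρ α x) ^ 2 = 1) :=
  exists_admissible_partition_of_unity_general V' hopen hcover π I hIadd hIsmooth hIadm hIconst
    hIsupp
end
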